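/- arXiv:1906.03055 — 6 statements merged into one kernel-verified Lean document; each statement's English description precedes it below -/
import Mathlib

section
/- The Demazure operators on k[X_1,...,X_d] satisfy the braid relation ∂_i ∂_{i+1} ∂_i = ∂_{i+1} ∂_i ∂_{i+1} for all 1 ≤ i ≤ d-2. -/
/-!
Write `s = (a b)`, `t = (b c)` and `Δ = (X a - X b)(X a - X c)(X b - X c)`. Unwinding the defining
relations (and using that `∂_{ab}` has `s`-invariant values) gives
`Δ · ∂_{ab} ∂_{bc} ∂_{ab} f = f - s f - t f + s t f + t s f - (a c) f`, the antisymmetrization of `f`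
over the permutations of `{a, b, c}`. The same identity for the reversed triple `c, b, a`, whose
operators are `-∂_{bc}` and `-∂_{ab}`, computes `Δ · ∂_{bc} ∂_{ab} ∂_{bc} f` as the same
antisymmetrization; cancel `Δ` in the domain of polynomials.
-/

open MvPolynomial

namespace MvPolynomial

variable {σ R : Type*} [CommRing R]

theorem X_sub_X_ne_zero [Nontrivial R] {a b : σ} (hab : a ≠ b) :
    (X a - X b : MvPolynomial σ R) ≠ 0 :=
  sub_ne_zero.mpr fun h => hab (X_injective h)

variable [DecidableEq σ]

def IsDemazureOperator (a b : σ) (D : MvPolynomial σ R → MvPolynomial σ R) : Prop :=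
  ∀ f, (X a - X b) * D f = f - rename (Equiv.swap a b) f

noncomputable def antisymmetrization (a b c : σ) (f : MvPolynomial σ R) : MvPolynomial σ R :=
  f - rename (Equiv.swap a b) f - rename (Equiv.swap b c) f
    + rename (Equiv.swap a b) (rename (Equiv.swap b c) f)
    + rename (Equiv.swap b c) (rename (Equiv.swap a b) f) - rename (Equiv.swap a c) f

theorem antisymmetrization_swap (a b c : σ) (f : MvPolynomial σ R) :
    antisymmetrization c b a f = antisymmetrization a b c f := by
  simp only [antisymmetrization, Equiv.swap_comm c b, Equiv.swap_comm b a, Equiv.swap_comm c a]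
  ring

theorem rename_swap_rename_swap (a b : σ) (f : MvPolynomial σ R) :
    rename (Equiv.swap a b) (rename (Equiv.swap a b) f) = f := by
  rw [rename_rename, ← Equiv.Perm.coe_mul, Equiv.swap_mul_self, Equiv.Perm.coe_one, rename_id_apply]

namespace IsDemazureOperator

variable {a b c : σ} {D E : MvPolynomial σ R → MvPolynomial σ R}

theorem neg (hD : IsDemazureOperator a b D) : IsDemazureOperator b a (-D) := by
  intro f
  rw [Pi.neg_apply, Equiv.swap_comm, ← hD f]
  ring

variable [IsDomain R]

theorem map_neg (hD : IsDemazureOperator a b D) (hab : a ≠ b) (f : MvPolynomial σ R) :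
    D (-f) = -D f :=
  mul_left_cancel₀ (X_sub_X_ne_zero hab) <| by
    rw [hD, mul_neg, hD, _root_.map_neg]
    ring

theorem rename_swap_apply (hD : IsDemazureOperator a b D) (hab : a ≠ b)
    (f : MvPolynomial σ R) : rename (Equiv.swap a b) (D f) = D f :=
  mul_left_cancel₀ (X_sub_X_ne_zero hab) <| by
    have h := congrArg (rename (Equiv.swap a b)) (hD f)
    simp only [map_mul, map_sub, rename_X, Equiv.swap_apply_left, Equiv.swap_apply_right,
      rename_swap_rename_swap] at h
    linear_combination -h - hD f

theorem mul_braid_apply (hD : IsDemazureOperator a b D) (hE : IsDemazureOperator b c E)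
    (hab : a ≠ b) (hbc : b ≠ c) (hac : a ≠ c) (f : MvPolynomial σ R) :
    (X a - X b) * (X a - X c) * (X b - X c) * D (E (D f)) = antisymmetrization a b c f := by
  have hs_c : Equiv.swap a b c = c := Equiv.swap_apply_of_ne_of_ne hac.symm hbc.symm
  have ht_a : Equiv.swap b c a = a := Equiv.swap_apply_of_ne_of_ne hab hac
  have hsts : rename (Equiv.swap a b) (rename (Equiv.swap b c) (rename (Equiv.swap a b) f))
      = rename (Equiv.swap a c) f := by
    rw [rename_rename, rename_rename, ← Equiv.Perm.coe_mul, ← Equiv.Perm.coe_mul,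
      Equiv.swap_comm a b, Equiv.swap_comm b c, Equiv.swap_mul_swap_mul_swap hbc.symm hac.symm]
  have hs_Df := hD.rename_swap_apply hab f
  have h_f := hD f
  have h_Df := hE (D f)
  have h_EDf := hD (E (D f))
  have hs_h_Df := congrArg (rename (Equiv.swap a b)) h_Df
  have ht_h_f := congrArg (rename (Equiv.swap b c)) h_f
  have hst_h_f := congrArg (rename (Equiv.swap a b)) ht_h_f
  simp only [map_mul, map_sub, rename_X, Equiv.swap_apply_left, Equiv.swap_apply_right, hs_c,
    ht_a] at hs_h_Df ht_h_f hst_h_f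
  rw [antisymmetrization, ← hsts]
  linear_combination (X a - X c) * (X b - X c) * h_EDf + (X a - X c) * h_Df
    - (X b - X c) * hs_h_Df - (X b - X c) * hs_Df + h_f - ht_h_f + hst_h_f

theorem braid (hD : IsDemazureOperator a b D) (hE : IsDemazureOperator b c E)
    (hab : a ≠ b) (hbc : b ≠ c) (hac : a ≠ c) (f : MvPolynomial σ R) :
    D (E (D f)) = E (D (E f)) :=
  mul_left_cancel₀ (mul_ne_zero (mul_ne_zero (X_sub_X_ne_zero hab) (X_sub_X_ne_zero hac))
      (X_sub_X_ne_zero hbc)) <| by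
    have h := hE.neg.mul_braid_apply hD.neg hbc.symm hab.symm hac.symm f
    simp only [Pi.neg_apply, hD.map_neg hab, neg_neg, antisymmetrization_swap] at h
    rw [hD.mul_braid_apply hE hab hbc hac, ← h]
    ring

end IsDemazureOperator

end MvPolynomial

/-- the Demazure operators satisfy the braid relation
`∂ᵢ ∂ᵢ₊₁ ∂ᵢ = ∂ᵢ₊₁ ∂ᵢ ∂ᵢ₊₁`. -/
theorem demazure_braid {k : Type*} [Field k] {n : ℕ}
    (Dem : Fin n → MvPolynomial (Fin (n + 1)) k → MvPolynomial (Fin (n + 1)) k)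
    (hDem : ∀ (i : Fin n) (f : MvPolynomial (Fin (n + 1)) k),
      (X i.castSucc - X i.succ) * Dem i f
        = f - rename (Equiv.swap i.castSucc i.succ) f)
    (i j : Fin n) (hij : (j : ℕ) = (i : ℕ) + 1)
    (f : MvPolynomial (Fin (n + 1)) k) :
    Dem i (Dem j (Dem i f)) = Dem j (Dem i (Dem j f)) := by
  have hj : j.castSucc = i.succ := Fin.ext (by simp [hij])
  have hDi : IsDemazureOperator i.castSucc i.succ (Dem i) := hDem i
  have hDj : IsDemazureOperator i.succ j.succ (Dem j) := hj ▸ hDem j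
  refine hDi.braid hDj ?_ ?_ ?_ f <;> simp [Fin.ext_iff] <;> omega
end

section
/- The operators T_i(f) = s_i(f) - ∂_i(f) on k[X_1,...,X_d] satisfy the braid relation T_i T_{i+1} T_i = T_{i+1} T_i T_{i+1} for all 1 ≤ i ≤ d-2. -/
/-!
Clearing the denominator of `∂ᵢ` turns `Tᵢ = sᵢ - ∂ᵢ` into `αᵢ Tᵢ g = (1 + αᵢ) sᵢ g - g` with
`αᵢ = Xᵢ - Xᵢ₊₁`. Iterating this three times expresses `α₁² α₂ (α₁ + α₂) · T₁ T₂ T₁ f` as an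
explicit combination of the six permuted copies `w f`, `w ∈ ⟨s₁, s₂⟩`, and symmetrically for
`T₂ T₁ T₂ f`. Using only how `s₁, s₂` act on the roots `α₁, α₂, α₁ + α₂` and `s₁ s₂ s₁ = s₂ s₁ s₂`,
the two combinations agree after multiplying by `α₂` resp. `α₁`, and `α₁² α₂² (α₁ + α₂)` can be
cancelled in the domain of polynomials.
-/

open MvPolynomial Equiv

section BraidRelation

variable {R F : Type*} [CommRing R] [FunLike F R R] [RingHomClass F R R]
  {s t : F} {α β : R} {U V : R → R}

theorem mul_braidWord_eq (hs : ∀ x, s (s x) = x) (hsα : s α = -α) (hsβ : s β = α + β)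
    (htα : t α = α + β) (hU : ∀ g, α * U g = (1 + α) * s g - g)
    (hV : ∀ g, β * V g = (1 + β) * t g - g) (f : R) :
    α ^ 2 * β * (α + β) * U (V (U f)) =
      (1 + α) * (α * (1 + α + β) * ((1 + β) * s (t (s f)) - s (t f)) + β * ((1 - α) * f - s f))
        - α * (1 + β) * ((1 + α + β) * t (s f) - t f) + (α + β) * ((1 + α) * s f - f) := by
  have h1 := hU f
  have h1t : (α + β) * t (U f) = (1 + α + β) * t (s f) - t f := by
    have := congrArg t h1
    simp only [map_mul, map_sub, map_add, map_one, htα] at this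
    linear_combination this
  have h2 : α * β * (α + β) * V (U f) =
      α * (1 + β) * ((1 + α + β) * t (s f) - t f) - (α + β) * ((1 + α) * s f - f) := by
    linear_combination (α * (α + β)) * hV (U f) + (α * (1 + β)) * h1t - (α + β) * h1
  have h2s := congrArg s h2
  simp only [map_mul, map_sub, map_add, map_one, hsα, hsβ, hs] at h2s
  linear_combination (α * β * (α + β)) * hU (V (U f)) - (1 + α) * h2s - h2

theorem braid_of_mul_eq [IsDomain R] (hs : ∀ x, s (s x) = x) (ht : ∀ x, t (t x) = x)
    (hst : ∀ x, s (t (s x)) = t (s (t x))) (hsα : s α = -α) (htβ : t β = -β)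
    (hsβ : s β = α + β) (htα : t α = α + β) (hα : α ≠ 0) (hβ : β ≠ 0) (hαβ : α + β ≠ 0)
    (hU : ∀ g, α * U g = (1 + α) * s g - g) (hV : ∀ g, β * V g = (1 + β) * t g - g) (f : R) :
    U (V (U f)) = V (U (V f)) := by
  have hUVU := mul_braidWord_eq hs hsα hsβ htα hU hV f
  have hVUV := mul_braidWord_eq ht htβ (htα.trans (add_comm α β)) (hsβ.trans (add_comm α β)) hV hU f
  rw [hst] at hUVU
  refine mul_left_cancel₀ (by positivity : α ^ 2 * β ^ 2 * (α + β) ≠ 0) ?_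
  linear_combination β * hUVU - α * hVUV

end BraidRelation

section Rename

variable {σ k : Type*} [CommSemiring k]

theorem MvPolynomial.rename_perm_rename_perm (e e' : Perm σ) (p : MvPolynomial σ k) :
    rename e (rename e' p) = rename (e * e') p := by
  rw [rename_rename, Perm.coe_mul]

variable [DecidableEq σ]

theorem MvPolynomial.rename_swap_rename_swap_s7 (a b : σ) (p : MvPolynomial σ k) :
    rename (swap a b) (rename (swap a b) p) = p := by
  rw [rename_perm_rename_perm, swap_mul_self, Perm.coe_one, rename_id, AlgHom.id_apply]

theorem MvPolynomial.rename_swap_braid {a b c : σ} (hab : a ≠ b) (hac : a ≠ c) (hbc : b ≠ c)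
    (p : MvPolynomial σ k) :
    rename (swap a b) (rename (swap b c) (rename (swap a b) p)) =
      rename (swap b c) (rename (swap a b) (rename (swap b c) p)) := by
  have hl : swap a b * swap b c * swap a b = swap a c := by
    rw [swap_comm a b, swap_comm b c, swap_mul_swap_mul_swap hbc.symm hac.symm]
  have hr : swap b c * swap a b * swap b c = swap a c := by
    rw [swap_mul_swap_mul_swap hab hac, swap_comm]
  simp only [rename_perm_rename_perm, ← mul_assoc, hl, hr]

theorem MvPolynomial.X_sub_X_ne_zero_s7 {σ k : Type*} [CommRing k] [Nontrivial k] {a b : σ}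
    (h : a ≠ b) : (X a - X b : MvPolynomial σ k) ≠ 0 :=
  sub_ne_zero.mpr (X_injective.ne h)

end Rename

/-- the operators `Tᵢ f = sᵢ f - ∂ᵢ f` satisfy the braid relation
`Tᵢ Tᵢ₊₁ Tᵢ = Tᵢ₊₁ Tᵢ Tᵢ₊₁`. -/
theorem T_braid {k : Type*} [Field k] {n : ℕ}
    (Dem : Fin n → MvPolynomial (Fin (n + 1)) k → MvPolynomial (Fin (n + 1)) k)
    (hDem : ∀ (i : Fin n) (f : MvPolynomial (Fin (n + 1)) k),
      (X i.castSucc - X i.succ) * Dem i f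
        = f - rename (Equiv.swap i.castSucc i.succ) f)
    (T : Fin n → MvPolynomial (Fin (n + 1)) k → MvPolynomial (Fin (n + 1)) k)
    (hT : ∀ (i : Fin n) (f : MvPolynomial (Fin (n + 1)) k),
      T i f = rename (Equiv.swap i.castSucc i.succ) f - Dem i f)
    (i j : Fin n) (hij : (j : ℕ) = (i : ℕ) + 1)
    (f : MvPolynomial (Fin (n + 1)) k) :
    T i (T j (T i f)) = T j (T i (T j f)) := by
  have hTmul : ∀ m g, (X m.castSucc - X m.succ) * T m g
      = (1 + (X m.castSucc - X m.succ)) * rename (swap m.castSucc m.succ) g - g := by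
    intro m g
    rw [hT]
    linear_combination -hDem m g
  have hj : j.castSucc = i.succ := Fin.ext (by simp [hij])
  have hab : i.castSucc ≠ i.succ := Fin.castSucc_lt_succ.ne
  have hac : i.castSucc ≠ j.succ := by simp [Fin.ext_iff, hij]; omega
  have hbc : i.succ ≠ j.succ := by simp [Fin.ext_iff, hij]
  refine braid_of_mul_eq (rename_swap_rename_swap_s7 _ _) (rename_swap_rename_swap_s7 _ _)
    (rename_swap_braid hab hac hbc) ?_ ?_ ?_ ?_ (X_sub_X_ne_zero_s7 hab) (X_sub_X_ne_zero_s7 hbc) ?_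
    (hTmul i) (hj ▸ hTmul j) f
  · simp
  · simp
  · simp [swap_apply_of_ne_of_ne hac.symm hbc.symm]
  · simp [swap_apply_of_ne_of_ne hab hac]
  · rw [sub_add_sub_cancel]
    exact X_sub_X_ne_zero_s7 hac
end

section
/- Fix q in k nonzero. The operators T_i(f) = q·s_i(f) - (q-1)·X_{i+1}·∂_i(f) on k[X_1^{±1},...,X_d^{±1}] satisfy the affine Hecke relation T_i∘X_i∘T_i = q·X_{i+1}, where X_j denotes multiplication by X_j. -/
/-- The Laurent polynomial ring `k[X₁^{±1},…,X_d^{±1}]`, realized as the group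
algebra of `Fin d →₀ ℤ` over `k`. -/
abbrev LaurentPol (k : Type*) [Field k] (d : ℕ) : Type _ :=
  AddMonoidAlgebra k (Fin d →₀ ℤ)

/-- The Laurent variable `X_j`. -/
noncomputable def LX {k : Type*} [Field k] {d : ℕ} (j : Fin d) : LaurentPol k d :=
  AddMonoidAlgebra.single (Finsupp.single j 1) 1

/-- The algebra automorphism `sᵢ` of the Laurent polynomial ring swapping
`Xᵢ` and `Xᵢ₊₁`. -/
noncomputable def Lsw (k : Type*) [Field k] {n : ℕ} (i : Fin n) :
    LaurentPol k (n + 1) ≃ₐ[k] LaurentPol k (n + 1) :=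
  AddMonoidAlgebra.domCongr k k (Finsupp.domCongr (Equiv.swap i.castSucc i.succ))

/-!
The relation holds for any involution `s` of a commutative algebra without zero divisors
exchanging two distinct elements `a` and `b`, once `∂` is a divided difference
`(a - b) ∂ f = f - s f`: the divided differences are `s`-invariant, `s` is then computed
on `T f`, and the relation becomes a polynomial identity after multiplying by `a - b`.
-/

section DividedDifference

variable {k R : Type*} [CommRing k] [CommRing R] [NoZeroDivisors R] [Algebra k R]
  {s : R →ₐ[k] R} {a b : R}

theorem map_eq_self_of_mul_sub_eq (hs : ∀ x, s (s x) = x) (hsa : s a = b) (hsb : s b = a)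
    (hab : a ≠ b) {f D : R} (hD : (a - b) * D = f - s f) : s D = D := by
  have hsD : (b - a) * s D = s f - f := by
    simpa only [map_mul, map_sub, hsa, hsb, hs] using congrArg s hD
  exact mul_left_cancel₀ (sub_ne_zero.2 hab) (by linear_combination -hsD - hD)

variable (s b) in
def demazureLusztig (Dem : R → R) (q : k) (f : R) : R :=
  q • s f - (q - 1) • (b * Dem f)

theorem demazureLusztig_mul_demazureLusztig (hs : ∀ x, s (s x) = x) (hsa : s a = b)
    (hsb : s b = a) (hab : a ≠ b) {Dem : R → R} (hDem : ∀ f, (a - b) * Dem f = f - s f)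
    (q : k) (f : R) :
    demazureLusztig s b Dem q (a * demazureLusztig s b Dem q f) = q • (b * f) := by
  set Q := algebraMap k R q
  have hT : ∀ g, demazureLusztig s b Dem q g = Q * s g - (Q - 1) * (b * Dem g) := fun g => by
    simp only [demazureLusztig, Algebra.smul_def, map_sub, map_one, Q]
  set Tf := demazureLusztig s b Dem q f
  have hsD : s (Dem f) = Dem f := map_eq_self_of_mul_sub_eq hs hsa hsb hab (hDem f)
  have hsTf : s Tf = Q * f - (Q - 1) * (a * Dem f) := by
    simp only [Tf, hT, map_sub, map_mul, map_one, s.commutes, hs, hsb, hsD, Q]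
  have hD₂ := hDem (a * Tf)
  rw [map_mul, hsa, hsTf] at hD₂
  rw [hT, map_mul, hsa, hsTf, Algebra.smul_def]
  refine mul_left_cancel₀ (sub_ne_zero.2 hab) ?_
  linear_combination (-(Q * (Q - 1) * a * b)) * hDem f - ((Q - 1) * b) * hD₂ -
    ((Q - 1) * a * b) * hT f

end DividedDifference

section Laurent

variable {k : Type*} [Field k] {n : ℕ}

theorem LX_castSucc_ne_LX_succ (i : Fin n) :
    (LX i.castSucc : LaurentPol k (n + 1)) ≠ LX i.succ := fun h =>
  (Fin.castSucc_lt_succ (i := i)).ne <| Finsupp.single_left_injective one_ne_zero <|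
    AddMonoidAlgebra.single_left_injective one_ne_zero h

theorem Lsw_LX_castSucc (i : Fin n) : Lsw k i (LX i.castSucc) = LX i.succ := by
  simp [Lsw, LX, AddMonoidAlgebra.domCongr_single, Finsupp.equivMapDomain_single]

theorem Lsw_LX_succ (i : Fin n) : Lsw k i (LX i.succ) = LX i.castSucc := by
  simp [Lsw, LX, AddMonoidAlgebra.domCongr_single, Finsupp.equivMapDomain_single]

theorem Lsw_symm (i : Fin n) : (Lsw k i).symm = Lsw k i := by
  rw [Lsw, AddMonoidAlgebra.domCongr_symm]
  congr 1

theorem Lsw_Lsw (i : Fin n) (f : LaurentPol k (n + 1)) : Lsw k i (Lsw k i f) = f := by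
  simpa only [Lsw_symm] using (Lsw k i).symm_apply_apply f

end Laurent

theorem laurentT_affine_Hecke_general {k : Type*} [Field k] {n : ℕ} (q : k)
    (Dem : Fin n → LaurentPol k (n + 1) → LaurentPol k (n + 1))
    (hDem : ∀ (i : Fin n) (f : LaurentPol k (n + 1)),
      (LX i.castSucc - LX i.succ) * Dem i f = f - Lsw k i f)
    (T : Fin n → LaurentPol k (n + 1) → LaurentPol k (n + 1))
    (hT : ∀ (i : Fin n) (f : LaurentPol k (n + 1)),
      T i f = q • Lsw k i f - (q - 1) • (LX i.succ * Dem i f))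
    (i : Fin n) (f : LaurentPol k (n + 1)) :
    T i (LX i.castSucc * T i f) = q • (LX i.succ * f) := by
  have hT' : T i = demazureLusztig (Lsw k i).toAlgHom (LX i.succ) (Dem i) q := funext (hT i)
  rw [hT']
  exact demazureLusztig_mul_demazureLusztig (Lsw_Lsw i) (Lsw_LX_castSucc i) (Lsw_LX_succ i)
    (LX_castSucc_ne_LX_succ i) (hDem i) q f

/-- the affine Hecke relation `Tᵢ ∘ Xᵢ ∘ Tᵢ = q·Xᵢ₊₁`. -/
theorem laurentT_affine_Hecke {k : Type*} [Field k] {n : ℕ} (q : k) (hq : q ≠ 0)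
    (Dem : Fin n → LaurentPol k (n + 1) → LaurentPol k (n + 1))
    (hDem : ∀ (i : Fin n) (f : LaurentPol k (n + 1)),
      (LX i.castSucc - LX i.succ) * Dem i f = f - Lsw k i f)
    (T : Fin n → LaurentPol k (n + 1) → LaurentPol k (n + 1))
    (hT : ∀ (i : Fin n) (f : LaurentPol k (n + 1)),
      T i f = q • Lsw k i f - (q - 1) • (LX i.succ * Dem i f))
    (i : Fin n) (f : LaurentPol k (n + 1)) :
    T i (LX i.castSucc * T i f) = q • (LX i.succ * f) :=
  laurentT_affine_Hecke_general q Dem hDem T hT i f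
end

section
/- In the DG-enhanced degenerate affine Hecke algebra H̄_d-bar, define ξ_1 = θ and ξ_{i+1} = T_i ξ_i T_i. Then for all r and ℓ: ξ_ℓ² = 0, ξ_r ξ_ℓ + ξ_ℓ ξ_r = 0, and T_r ξ_ℓ = ξ_{s_r(ℓ)} T_r, where s_r(ℓ) applies the transposition (r, r+1) to the index ℓ. -/
/-! Conjugation by an involution `t` is multiplicative, so it transports the relations
`x * x = 0` and `x * y + y * x = 0`. By the far commutation relations (and, for `ℓ = r + 2`,
the braid relation) `Tᵣ` commutes with `ξₗ` whenever `ℓ ∉ {r, r + 1}`, so conjugation by `Tᵣ`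
permutes the `ξ`'s as `sᵣ` permutes their indices. Hence `ξₗ² = 0` is transported from `θ² = 0`,
and the anticommutation of `ξₐ, ξ_b` (`a < b`) from that of `ξ₀, ξ₁`, which is the relation
`T₁θT₁θ + θT₁θT₁ = 0`: transpositions fixing `0` move the pair `(0, 1)` to `(0, b)`, and then
transpositions fixing `b` move it to `(a, b)`. -/

section Conjugation

variable {M : Type*} [Monoid M] {s t x y : M}

theorem commute_conj_of_braid (hst : s * t * s = t * s * t) (hx : Commute t x) :
    Commute s (t * (s * x * s) * t) := by
  calc s * (t * (s * x * s) * t) = s * t * s * x * s * t := by simp only [mul_assoc]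
    _ = t * s * (t * x) * s * t := by rw [hst]; simp only [mul_assoc]
    _ = t * s * x * (t * s * t) := by rw [hx.eq]; simp only [mul_assoc]
    _ = t * (s * x * s) * t * s := by rw [← hst]; simp only [mul_assoc]

theorem conj_mul_conj_of_mul_self (ht : t * t = 1) :
    t * x * t * (t * y * t) = t * (x * y) * t := by
  calc t * x * t * (t * y * t) = t * x * (t * t) * y * t := by simp only [mul_assoc]
    _ = t * (x * y) * t := by rw [ht, mul_one]; simp only [mul_assoc]

theorem conj_eq_of_mul_eq_mul (ht : t * t = 1) (h : t * x = y * t) : t * x * t = y := by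
  rw [h, mul_assoc, ht, mul_one]

end Conjugation

theorem conj_anticomm_of_mul_self {R : Type*} [Semiring R] {t x y : R} (ht : t * t = 1)
    (h : x * y + y * x = 0) : t * x * t * (t * y * t) + t * y * t * (t * x * t) = 0 := by
  rw [conj_mul_conj_of_mul_self ht, conj_mul_conj_of_mul_self ht, ← add_mul, ← mul_add, h,
    mul_zero, zero_mul]

namespace DGHecke

variable {A : Type*} [Semiring A] {n : ℕ} {T : Fin n → A} {θ : A}

/-- `xi T θ ℓ` is the paper's `ξ_{ℓ+1}`: indices start at `0`, so `T i` swaps `i` and `i + 1`. -/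
def xi (T : Fin n → A) (θ : A) : Fin (n + 1) → A :=
  Fin.induction θ fun i x => T i * x * T i

@[simp]
theorem xi_zero : xi T θ 0 = θ := Fin.induction_zero ..

@[simp]
theorem xi_succ (i : Fin n) : xi T θ i.succ = T i * xi T θ i.castSucc * T i :=
  Fin.induction_succ ..

theorem eq_xi {xi' : Fin (n + 1) → A} (h0 : xi' 0 = θ)
    (hS : ∀ i : Fin n, xi' i.succ = T i * xi' i.castSucc * T i) : xi' = xi T θ := by
  funext ℓ
  induction ℓ using Fin.induction with
  | zero => rw [h0, xi_zero]
  | succ i ih => rw [hS, ih, xi_succ]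

theorem xi_mul_self (hT2 : ∀ i : Fin n, T i * T i = 1) (hθ2 : θ * θ = 0) (ℓ : Fin (n + 1)) :
    xi T θ ℓ * xi T θ ℓ = 0 := by
  induction ℓ using Fin.induction with
  | zero => rw [xi_zero, hθ2]
  | succ i ih => rw [xi_succ, conj_mul_conj_of_mul_self (hT2 i), ih, mul_zero, zero_mul]

theorem commute_T_of_far
    (hTTcomm : ∀ i j : Fin n, (i : ℕ) + 1 < (j : ℕ) → T i * T j = T j * T i) {r i : Fin n}
    (h : (r : ℕ) + 1 < i ∨ (i : ℕ) + 1 < r) : Commute (T r) (T i) :=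
  h.elim (hTTcomm r i) fun h => (hTTcomm i r h).symm

theorem commute_T_xi_of_lt
    (hTTcomm : ∀ i j : Fin n, (i : ℕ) + 1 < (j : ℕ) → T i * T j = T j * T i)
    (hTθ : ∀ i : Fin n, (i : ℕ) ≠ 0 → T i * θ = θ * T i) (r : Fin n) (ℓ : Fin (n + 1))
    (h : (ℓ : ℕ) < r) : Commute (T r) (xi T θ ℓ) := by
  induction ℓ using Fin.induction with
  | zero => rw [xi_zero]; exact hTθ r (Nat.ne_zero_of_lt h)
  | succ i ih =>
    rw [Fin.val_succ] at h
    have hri : Commute (T r) (T i) := commute_T_of_far hTTcomm (Or.inr h)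
    rw [xi_succ]
    exact (hri.mul_right (ih (by rw [Fin.val_castSucc]; omega))).mul_right hri

theorem commute_T_xi_of_succ_lt
    (hTTcomm : ∀ i j : Fin n, (i : ℕ) + 1 < (j : ℕ) → T i * T j = T j * T i)
    (hbraid : ∀ i j : Fin n, (j : ℕ) = (i : ℕ) + 1 → T i * T j * T i = T j * T i * T j)
    (hTθ : ∀ i : Fin n, (i : ℕ) ≠ 0 → T i * θ = θ * T i) (r : Fin n) (ℓ : Fin (n + 1))
    (h : (r : ℕ) + 1 < ℓ) : Commute (T r) (xi T θ ℓ) := by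
  induction ℓ using Fin.induction with
  | zero => simp at h
  | succ i ih =>
    rw [Fin.val_succ] at h
    rw [xi_succ]
    rcases (show (r : ℕ) + 1 < i ∨ (i : ℕ) = r + 1 by omega) with hfar | hadj
    · have hri : Commute (T r) (T i) := commute_T_of_far hTTcomm (Or.inl hfar)
      exact (hri.mul_right (ih (by rw [Fin.val_castSucc]; omega))).mul_right hri
    · have hi : i.castSucc = r.succ := Fin.ext (by simp [hadj])
      rw [hi, xi_succ]
      exact commute_conj_of_braid (hbraid r i hadj)
        (commute_T_xi_of_lt hTTcomm hTθ i r.castSucc (by simp [hadj]))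

theorem T_mul_xi (hT2 : ∀ i : Fin n, T i * T i = 1)
    (hTTcomm : ∀ i j : Fin n, (i : ℕ) + 1 < (j : ℕ) → T i * T j = T j * T i)
    (hbraid : ∀ i j : Fin n, (j : ℕ) = (i : ℕ) + 1 → T i * T j * T i = T j * T i * T j)
    (hTθ : ∀ i : Fin n, (i : ℕ) ≠ 0 → T i * θ = θ * T i) (r : Fin n) (ℓ : Fin (n + 1)) :
    T r * xi T θ ℓ = xi T θ (Equiv.swap r.castSucc r.succ ℓ) * T r := by
  rcases eq_or_ne ℓ r.castSucc with rfl | h₁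
  · rw [Equiv.swap_apply_left, xi_succ, mul_assoc _ (T r), hT2, mul_one]
  rcases eq_or_ne ℓ r.succ with rfl | h₂
  · rw [Equiv.swap_apply_right, xi_succ, ← mul_assoc, ← mul_assoc, hT2, one_mul]
  rw [Equiv.swap_apply_of_ne_of_ne h₁ h₂]
  rw [Ne, Fin.ext_iff, Fin.val_castSucc] at h₁
  rw [Ne, Fin.ext_iff, Fin.val_succ] at h₂
  rcases (show (ℓ : ℕ) < r ∨ (r : ℕ) + 1 < ℓ by omega) with h | h
  · exact commute_T_xi_of_lt hTTcomm hTθ r ℓ h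
  · exact commute_T_xi_of_succ_lt hTTcomm hbraid hTθ r ℓ h

theorem xi_anticomm_swap (hT2 : ∀ i : Fin n, T i * T i = 1)
    (hTTcomm : ∀ i j : Fin n, (i : ℕ) + 1 < (j : ℕ) → T i * T j = T j * T i)
    (hbraid : ∀ i j : Fin n, (j : ℕ) = (i : ℕ) + 1 → T i * T j * T i = T j * T i * T j)
    (hTθ : ∀ i : Fin n, (i : ℕ) ≠ 0 → T i * θ = θ * T i) (r : Fin n) {a b : Fin (n + 1)}
    (h : xi T θ a * xi T θ b + xi T θ b * xi T θ a = 0) :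
    xi T θ (Equiv.swap r.castSucc r.succ a) * xi T θ (Equiv.swap r.castSucc r.succ b) +
      xi T θ (Equiv.swap r.castSucc r.succ b) * xi T θ (Equiv.swap r.castSucc r.succ a) = 0 := by
  have hconj (ℓ : Fin (n + 1)) :=
    conj_eq_of_mul_eq_mul (hT2 r) (T_mul_xi hT2 hTTcomm hbraid hTθ r ℓ)
  rw [← hconj a, ← hconj b]
  exact conj_anticomm_of_mul_self (hT2 r) h

theorem xi_zero_anticomm (hT2 : ∀ i : Fin n, T i * T i = 1)
    (hTTcomm : ∀ i j : Fin n, (i : ℕ) + 1 < (j : ℕ) → T i * T j = T j * T i)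
    (hbraid : ∀ i j : Fin n, (j : ℕ) = (i : ℕ) + 1 → T i * T j * T i = T j * T i * T j)
    (hTθ : ∀ i : Fin n, (i : ℕ) ≠ 0 → T i * θ = θ * T i)
    (hT1θ : ∀ i : Fin n, (i : ℕ) = 0 → T i * θ * T i * θ + θ * T i * θ * T i = 0)
    (b : Fin (n + 1)) (hb : b ≠ 0) :
    xi T θ 0 * xi T θ b + xi T θ b * xi T θ 0 = 0 := by
  induction b using Fin.induction with
  | zero => exact absurd rfl hb
  | succ i ih =>
    by_cases hi : i.castSucc = 0
    · have hi₀ : (i : ℕ) = 0 := by simpa using congrArg Fin.val hi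
      rw [xi_succ, hi, xi_zero, add_comm]
      simpa only [mul_assoc] using hT1θ i hi₀
    · have h0 : Equiv.swap i.castSucc i.succ 0 = 0 :=
        Equiv.swap_apply_of_ne_of_ne (Ne.symm hi) (Fin.succ_ne_zero i).symm
      simpa only [h0, Equiv.swap_apply_left] using xi_anticomm_swap hT2 hTTcomm hbraid hTθ i (ih hi)

theorem xi_anticomm_of_lt (hT2 : ∀ i : Fin n, T i * T i = 1)
    (hTTcomm : ∀ i j : Fin n, (i : ℕ) + 1 < (j : ℕ) → T i * T j = T j * T i)
    (hbraid : ∀ i j : Fin n, (j : ℕ) = (i : ℕ) + 1 → T i * T j * T i = T j * T i * T j)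
    (hTθ : ∀ i : Fin n, (i : ℕ) ≠ 0 → T i * θ = θ * T i)
    (hT1θ : ∀ i : Fin n, (i : ℕ) = 0 → T i * θ * T i * θ + θ * T i * θ * T i = 0)
    {a b : Fin (n + 1)} (hab : a < b) :
    xi T θ a * xi T θ b + xi T θ b * xi T θ a = 0 := by
  induction a using Fin.induction generalizing b with
  | zero => exact xi_zero_anticomm hT2 hTTcomm hbraid hTθ hT1θ b hab.ne'
  | succ i ih =>
    have hb : Equiv.swap i.castSucc i.succ b = b :=
      Equiv.swap_apply_of_ne_of_ne (Fin.castSucc_lt_succ.trans hab).ne' hab.ne'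
    have := xi_anticomm_swap hT2 hTTcomm hbraid hTθ i (ih (Fin.castSucc_lt_succ.trans hab))
    simpa only [hb, Equiv.swap_apply_left] using this

theorem xi_anticomm (hT2 : ∀ i : Fin n, T i * T i = 1)
    (hTTcomm : ∀ i j : Fin n, (i : ℕ) + 1 < (j : ℕ) → T i * T j = T j * T i)
    (hbraid : ∀ i j : Fin n, (j : ℕ) = (i : ℕ) + 1 → T i * T j * T i = T j * T i * T j)
    (hθ2 : θ * θ = 0) (hTθ : ∀ i : Fin n, (i : ℕ) ≠ 0 → T i * θ = θ * T i)
    (hT1θ : ∀ i : Fin n, (i : ℕ) = 0 → T i * θ * T i * θ + θ * T i * θ * T i = 0)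
    (a b : Fin (n + 1)) : xi T θ a * xi T θ b + xi T θ b * xi T θ a = 0 := by
  rcases lt_trichotomy a b with hab | rfl | hba
  · exact xi_anticomm_of_lt hT2 hTTcomm hbraid hTθ hT1θ hab
  · rw [xi_mul_self hT2 hθ2, add_zero]
  · rw [add_comm]; exact xi_anticomm_of_lt hT2 hTTcomm hbraid hTθ hT1θ hba

end DGHecke

theorem dg_degenerate_Hecke_xi_relations_general {n : ℕ}
    {A : Type*} [Ring A]
    (T : Fin n → A) (θ : A)
    -- degenerate affine Hecke relations
    (hT2 : ∀ i : Fin n, T i * T i = 1)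
    (hTTcomm : ∀ i j : Fin n, (i : ℕ) + 1 < (j : ℕ) → T i * T j = T j * T i)
    (hbraid : ∀ i j : Fin n, (j : ℕ) = (i : ℕ) + 1 →
      T i * T j * T i = T j * T i * T j)
    -- relations involving the extra degree-1 generator θ
    (hθ2 : θ * θ = 0)
    (hTθ : ∀ i : Fin n, (i : ℕ) ≠ 0 → T i * θ = θ * T i)
    (hT1θ : ∀ i : Fin n, (i : ℕ) = 0 →
      T i * θ * T i * θ + θ * T i * θ * T i = 0)
    (xi : Fin (n + 1) → A)
    (hxi0 : ∀ ℓ : Fin (n + 1), (ℓ : ℕ) = 0 → xi ℓ = θ)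
    (hxiS : ∀ i : Fin n, xi i.succ = T i * xi i.castSucc * T i) :
    (∀ ℓ : Fin (n + 1), xi ℓ * xi ℓ = 0) ∧
    (∀ r ℓ : Fin (n + 1), xi r * xi ℓ + xi ℓ * xi r = 0) ∧
    (∀ (r : Fin n) (ℓ : Fin (n + 1)),
      T r * xi ℓ = xi (Equiv.swap r.castSucc r.succ ℓ) * T r) := by
  obtain rfl := DGHecke.eq_xi (hxi0 0 rfl) hxiS
  refine ⟨DGHecke.xi_mul_self hT2 hθ2, DGHecke.xi_anticomm hT2 hTTcomm hbraid hθ2 hTθ hT1θ,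
    DGHecke.T_mul_xi hT2 hTTcomm hbraid hTθ⟩

/-- in (any algebra with the relations of) the DG-enhanced degenerate
affine Hecke algebra, with `ξ₁ = θ` and `ξᵢ₊₁ = Tᵢ ξᵢ Tᵢ`, one has `ξₗ² = 0`,
`ξᵣ ξₗ + ξₗ ξᵣ = 0`, and `Tᵣ ξₗ = ξ_{sᵣ(ℓ)} Tᵣ`. -/
theorem dg_degenerate_Hecke_xi_relations {k : Type*} [Field k] {n : ℕ}
    {A : Type*} [Ring A] [Algebra k A]
    (T : Fin n → A) (Xv : Fin (n + 1) → A) (θ : A)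
    -- degenerate affine Hecke relations
    (hT2 : ∀ i : Fin n, T i * T i = 1)
    (hTTcomm : ∀ i j : Fin n, (i : ℕ) + 1 < (j : ℕ) → T i * T j = T j * T i)
    (hbraid : ∀ i j : Fin n, (j : ℕ) = (i : ℕ) + 1 →
      T i * T j * T i = T j * T i * T j)
    (hXX : ∀ r s : Fin (n + 1), Xv r * Xv s = Xv s * Xv r)
    (hTX : ∀ i : Fin n, T i * Xv i.castSucc - Xv i.succ * T i = -1)
    (hTXcomm : ∀ (i : Fin n) (r : Fin (n + 1)),
      r ≠ i.castSucc → r ≠ i.succ → T i * Xv r = Xv r * T i)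
    -- relations involving the extra degree-1 generator θ
    (hθ2 : θ * θ = 0)
    (hXθ : ∀ r : Fin (n + 1), Xv r * θ = θ * Xv r)
    (hTθ : ∀ i : Fin n, (i : ℕ) ≠ 0 → T i * θ = θ * T i)
    (hT1θ : ∀ i : Fin n, (i : ℕ) = 0 →
      T i * θ * T i * θ + θ * T i * θ * T i = 0)
    (xi : Fin (n + 1) → A)
    (hxi0 : ∀ ℓ : Fin (n + 1), (ℓ : ℕ) = 0 → xi ℓ = θ)
    (hxiS : ∀ i : Fin n, xi i.succ = T i * xi i.castSucc * T i) :
    (∀ ℓ : Fin (n + 1), xi ℓ * xi ℓ = 0) ∧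
    (∀ r ℓ : Fin (n + 1), xi r * xi ℓ + xi ℓ * xi r = 0) ∧
    (∀ (r : Fin n) (ℓ : Fin (n + 1)),
      T r * xi ℓ = xi (Equiv.swap r.castSucc r.succ ℓ) * T r) :=
  dg_degenerate_Hecke_xi_relations_general T θ hT2 hTTcomm hbraid hθ2 hTθ hT1θ xi hxi0 hxiS
end

section
/- In the DG-enhanced affine q-Hecke algebra H_d-cal (q ≠ 0, 1), define ξ_1 = θ and ξ_{i+1} = T_i ξ_i T_i^{-1}. Then ξ_ℓ² = 0 and ξ_r ξ_ℓ + ξ_ℓ ξ_r = 0 for all r, ℓ, and the commutation rules hold: T_ℓ ξ_r = ξ_r T_ℓ if r ≠ ℓ, ℓ+1; T_ℓ ξ_{ℓ+1} = ξ_ℓ T_ℓ + (q-1)(ξ_{ℓ+1} - ξ_ℓ); and T_ℓ ξ_ℓ = ξ_{ℓ+1} T_ℓ. -/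
/-!
Each `ξᵢ` is the image of `θ` under an inner automorphism, and all relations are transported
along these. By the braid relation, conjugation by `TᵢTᵢ₊₁` carries `Tᵢ` to `Tᵢ₊₁`; as it also
carries `ξᵢ` to `ξᵢ₊₁` (because `Tᵢ₊₁` commutes with `ξᵢ`), it transports the `θ`-relation of
`(T₁, θ)` to every pair `(Tₗ, ξₗ)`. Likewise `Tₗ ξᵣ = ξᵣ Tₗ` is transported from a smaller index.
Rewriting the transported `θ`-relation with `Tₗ ξₗ = ξₗ₊₁ Tₗ` and `Tₗ² = (q-1)Tₗ + q` leaves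
`q (ξₗ ξₗ₊₁ + ξₗ₊₁ ξₗ) = 0`; every other anticommutator is the conjugate of one at a smaller index
by a `Tⱼ` commuting with the other factor.
-/

section InnerAut

variable (k : Type*) {A : Type*} [CommRing k] [Ring A] [Algebra k A]

def innerAut (u : Aˣ) : A ≃ₐ[k] A :=
  MulSemiringAction.toAlgEquiv k A (ConjAct.toConjAct u)

variable {k}

theorem innerAut_apply (u : Aˣ) (x : A) : innerAut k u x = u * x * ↑u⁻¹ := rfl

theorem innerAut_mul (u v : Aˣ) (x : A) :
    innerAut k (u * v) x = innerAut k u (innerAut k v x) :=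
  mul_smul (ConjAct.toConjAct u) (ConjAct.toConjAct v) x

theorem innerAut_mul_unit (u : Aˣ) (x : A) : innerAut k u x * u = u * x := by
  simp [innerAut_apply, mul_assoc]

theorem innerAut_eq_self_of_commute {u : Aˣ} {a : A} (h : Commute (u : A) a) :
    innerAut k u a = a := by
  rw [innerAut_apply, h.eq, mul_assoc, Units.mul_inv, mul_one]

theorem innerAut_mul_of_braid {a b : Aˣ} (h : (a : A) * b * a = b * a * b) :
    innerAut k (a * b) a = b := by
  rw [innerAut_apply, mul_inv_rev, Units.val_mul, Units.val_mul, ← mul_assoc, h]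
  simp [mul_assoc]

theorem anticommute_innerAut_of_commute {u : Aˣ} {a x : A} (hu : Commute (u : A) a)
    (h : a * x + x * a = 0) : a * innerAut k u x + innerAut k u x * a = 0 := by
  simpa [innerAut_eq_self_of_commute hu] using congrArg (innerAut k u) h

end InnerAut

section Hecke

variable {k A : Type*} [CommRing k] [Ring A] [Algebra k A] {q : k}

theorem hecke_mul_self {t : A} (h : (t - q • 1) * (t + 1) = 0) :
    t * t = (q - 1) • t + q • 1 := by
  rw [← sub_eq_zero, ← h]
  simp only [sub_mul, mul_add, mul_one, smul_mul_assoc, one_mul, sub_smul, one_smul]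
  abel

theorem mul_innerAut_of_hecke (u : Aˣ) (hu : (u : A) * u = (q - 1) • (u : A) + q • 1) (x : A) :
    u * innerAut k u x = x * u + (q - 1) • (innerAut k u x - x) := by
  have hinv : q • (↑u⁻¹ : A) = u - (q - 1) • 1 := by
    have := congrArg (· * (↑u⁻¹ : A)) hu
    simp only [add_mul, smul_mul_assoc, mul_assoc, Units.mul_inv, mul_one, one_mul] at this
    rw [this]; abel
  calc (u : A) * innerAut k u x = (u * u) * x * ↑u⁻¹ := by simp [innerAut_apply, mul_assoc]
    _ = (q - 1) • innerAut k u x + x * (q • (↑u⁻¹ : A)) := by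
      rw [hu, innerAut_apply, mul_smul_comm]; simp [add_mul, mul_assoc]
    _ = x * u + (q - 1) • (innerAut k u x - x) := by
      rw [hinv, mul_sub, mul_smul_comm, mul_one, smul_sub]; abel

/-- The defining relation `T₁θT₁θ + θT₁θT₁ = (q-1)θT₁θ` of the DG-enhanced affine Hecke
algebra, for an arbitrary pair `(t, x)` in place of `(T₁, θ)`. -/
def ThetaRelation (q : k) (t x : A) : Prop :=
  t * x * t * x + x * t * x * t = (q - 1) • (x * t * x)

theorem ThetaRelation.map {B F : Type*} [Ring B] [Algebra k B] [FunLike F A B]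
    [AlgHomClass F k A B] (f : F) {t x : A}
    (h : ThetaRelation q t x) : ThetaRelation q (f t) (f x) := by
  simpa only [ThetaRelation, map_add, map_mul, map_smul] using congrArg f h

theorem ThetaRelation.anticommute_innerAut (hq : IsUnit q) {u : Aˣ}
    (hu : (u : A) * u = (q - 1) • (u : A) + q • 1) {x : A} (hx : x * x = 0)
    (h : ThetaRelation q (u : A) x) : x * innerAut k u x + innerAut k u x * x = 0 := by
  set y := innerAut k u x
  have hyu : y * u = u * x := innerAut_mul_unit u x
  have hyux : y * u * x = 0 := by rw [hyu, mul_assoc, hx, mul_zero]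
  rw [← hq.smul_eq_zero]
  -- In `ThetaRelation`, replace `u x` by `y u` and `u²` by `(q-1)u + q`.
  have key : (q - 1) • (y * u * x) + q • (y * x + x * y) = 0 := by
    have e : y * (u * u) * x + x * y * (u * u) = (q - 1) • (x * y * u) := by
      unfold ThetaRelation at h
      rw [mul_assoc x (u : A) x, ← hyu] at h
      simpa only [← mul_assoc] using h
    rw [hu] at e
    simp only [mul_add, add_mul, mul_smul_comm, smul_mul_assoc, mul_one] at e
    rw [← sub_eq_zero] at e
    rw [← e, smul_add]; noncomm_ring
  rwa [hyux, smul_zero, zero_add, add_comm] at key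

end Hecke

section ConjugationChain

variable (k : Type*) {A : Type*} [CommRing k] [Ring A] [Algebra k A] {n : ℕ}

def IsConjugationChain (T : Fin n → Aˣ) (x : Fin (n + 1) → A) : Prop :=
  ∀ i : Fin n, x i.succ = innerAut k (T i) (x i.castSucc)

variable {k} {T : Fin n → Aˣ} {x : Fin (n + 1) → A}

namespace IsConjugationChain

theorem mul_self_eq_zero (hc : IsConjugationChain k T x) (h0 : x 0 * x 0 = 0) (r : Fin (n + 1)) :
    x r * x r = 0 := by
  induction r using Fin.induction with
  | zero => exact h0
  | succ i ih => rw [hc i, ← map_mul, ih, map_zero]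

theorem commute (hc : IsConjugationChain k T x)
    (hfar : ∀ i j : Fin n, (i : ℕ) + 1 < j → Commute (T i : A) (T j))
    (hbraid : ∀ i j : Fin n, (j : ℕ) = i + 1 → (T i : A) * T j * T i = T j * T i * T j)
    (h0 : ∀ ℓ : Fin n, (ℓ : ℕ) ≠ 0 → Commute (T ℓ : A) (x 0)) :
    ∀ (r : Fin (n + 1)) (ℓ : Fin n), r ≠ ℓ.castSucc → r ≠ ℓ.succ → Commute (T ℓ : A) (x r) := by
  intro r
  induction r using WellFoundedLT.induction with
  | _ r ih =>
  intro ℓ hr₀ hr₁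
  cases r using Fin.cases with
  | zero => exact h0 ℓ fun h => hr₀ (Fin.ext h.symm)
  | succ i =>
    rw [hc i]
    simp only [ne_eq, Fin.ext_iff, Fin.val_succ, Fin.val_castSucc] at hr₀ hr₁
    by_cases hadj : (i : ℕ) = ℓ + 1
    · have hi : i.castSucc = ℓ.succ := Fin.ext (by simp; omega)
      have := (ih ℓ.castSucc (by simp [Fin.lt_def]; omega) i (by simp [Fin.ext_iff]; omega)
        (by simp [Fin.ext_iff]; omega)).map (innerAut k (T i * T ℓ))
      rwa [innerAut_mul_of_braid (hbraid ℓ i hadj).symm, innerAut_mul, ← hc ℓ, ← hi] at this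
    · have hiℓ : Commute (T i : A) (T ℓ) := by
        rcases Nat.lt_or_gt_of_ne hadj with h | h
        · exact hfar i ℓ (by omega)
        · exact (hfar ℓ i h).symm
      have := (ih i.castSucc Fin.castSucc_lt_succ ℓ (by simp [Fin.ext_iff]; omega)
        (by simp [Fin.ext_iff]; omega)).map (innerAut k (T i))
      rwa [innerAut_eq_self_of_commute hiℓ] at this

theorem thetaRelation (hc : IsConjugationChain k T x) {q : k}
    (hbraid : ∀ i j : Fin n, (j : ℕ) = i + 1 → (T i : A) * T j * T i = T j * T i * T j)
    (hcomm : ∀ (r : Fin (n + 1)) (ℓ : Fin n), r ≠ ℓ.castSucc → r ≠ ℓ.succ →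
      Commute (T ℓ : A) (x r))
    (h0 : ∀ ℓ : Fin n, (ℓ : ℕ) = 0 → ThetaRelation q (T ℓ : A) (x 0)) :
    ∀ ℓ : Fin n, ThetaRelation q (T ℓ : A) (x ℓ.castSucc) := by
  rintro ⟨m, hm⟩
  induction m with
  | zero => exact h0 _ rfl
  | succ m ih =>
    set j : Fin n := ⟨m, by omega⟩
    set ℓ : Fin n := ⟨m + 1, hm⟩
    have hℓ : ℓ.castSucc = j.succ := rfl
    have hjℓ : Commute (T ℓ : A) (x j.castSucc) :=
      hcomm _ _ (by simp [Fin.ext_iff, j, ℓ]) (by simp [Fin.ext_iff, j, ℓ]; omega)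
    have := (ih (by omega) : ThetaRelation q (T j : A) (x j.castSucc)).map (innerAut k (T j * T ℓ))
    rwa [innerAut_mul_of_braid (hbraid j ℓ rfl),
      innerAut_mul, innerAut_eq_self_of_commute hjℓ, ← hc j, ← hℓ] at this

theorem anticommute (hc : IsConjugationChain k T x) {q : k} (hq : IsUnit q)
    (hT : ∀ i, (T i : A) * T i = (q - 1) • (T i : A) + q • 1) (hsq : ∀ r, x r * x r = 0)
    (hcomm : ∀ (r : Fin (n + 1)) (ℓ : Fin n), r ≠ ℓ.castSucc → r ≠ ℓ.succ →
      Commute (T ℓ : A) (x r))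
    (hθ : ∀ ℓ : Fin n, ThetaRelation q (T ℓ : A) (x ℓ.castSucc)) (r ℓ : Fin (n + 1)) :
    x r * x ℓ + x ℓ * x r = 0 := by
  have hlt : ∀ ℓ r : Fin (n + 1), r < ℓ → x r * x ℓ + x ℓ * x r = 0 := by
    intro ℓ
    induction ℓ using Fin.induction with
    | zero => exact fun r h => absurd h (Fin.not_lt_zero r)
    | succ j ih =>
      intro r hr
      rw [hc j]
      rcases (Fin.le_castSucc_iff.mpr hr).lt_or_eq with hr' | rfl
      · exact anticommute_innerAut_of_commute
          (hcomm r j hr'.ne (by simp [Fin.ext_iff, Fin.lt_def] at hr' ⊢; omega)) (ih r hr')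
      · exact (hθ j).anticommute_innerAut hq (hT j) (hsq _)
  rcases lt_trichotomy r ℓ with h | rfl | h
  · exact hlt ℓ r h
  · rw [hsq, add_zero]
  · rw [add_comm]; exact hlt r ℓ h

end IsConjugationChain

end ConjugationChain

theorem dg_q_Hecke_xi_relations_general {k : Type*} [Field k] {n : ℕ} (q : k) (hq0 : q ≠ 0)
    {A : Type*} [Ring A] [Algebra k A]
    (T : Fin n → A) (θ : A)
    -- affine q-Hecke relations
    (hT2 : ∀ i : Fin n, (T i - q • 1) * (T i + 1) = 0)
    (hTTcomm : ∀ i j : Fin n, (i : ℕ) + 1 < (j : ℕ) → T i * T j = T j * T i)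
    (hbraid : ∀ i j : Fin n, (j : ℕ) = (i : ℕ) + 1 →
      T i * T j * T i = T j * T i * T j)
    -- relations involving the extra degree-1 generator θ
    (hθ2 : θ * θ = 0)
    (hTθ : ∀ i : Fin n, (i : ℕ) ≠ 0 → T i * θ = θ * T i)
    (hT1θ : ∀ i : Fin n, (i : ℕ) = 0 →
      T i * θ * T i * θ + θ * T i * θ * T i = (q - 1) • (θ * T i * θ))
    (Tinv : Fin n → A)
    (hTinv : ∀ i : Fin n, T i * Tinv i = 1 ∧ Tinv i * T i = 1)
    (xi : Fin (n + 1) → A)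
    (hxi0 : ∀ ℓ : Fin (n + 1), (ℓ : ℕ) = 0 → xi ℓ = θ)
    (hxiS : ∀ i : Fin n, xi i.succ = T i * xi i.castSucc * Tinv i) :
    (∀ ℓ : Fin (n + 1), xi ℓ * xi ℓ = 0) ∧
    (∀ r ℓ : Fin (n + 1), xi r * xi ℓ + xi ℓ * xi r = 0) ∧
    (∀ (ℓ : Fin n) (r : Fin (n + 1)), r ≠ ℓ.castSucc → r ≠ ℓ.succ →
      T ℓ * xi r = xi r * T ℓ) ∧
    (∀ ℓ : Fin n, T ℓ * xi ℓ.succ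
      = xi ℓ.castSucc * T ℓ + (q - 1) • (xi ℓ.succ - xi ℓ.castSucc)) ∧
    (∀ ℓ : Fin n, T ℓ * xi ℓ.castSucc = xi ℓ.succ * T ℓ) := by
  let u : Fin n → Aˣ := fun i => ⟨T i, Tinv i, (hTinv i).1, (hTinv i).2⟩
  have hc : IsConjugationChain k u xi := hxiS
  have h0 : xi 0 = θ := hxi0 0 rfl
  have hquad (i : Fin n) : (u i : A) * u i = (q - 1) • (u i : A) + q • 1 := hecke_mul_self (hT2 i)
  have hsq := hc.mul_self_eq_zero (h0 ▸ hθ2)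
  have hcomm := hc.commute hTTcomm hbraid (fun ℓ hℓ => h0 ▸ hTθ ℓ hℓ)
  have hrel := hc.thetaRelation hbraid hcomm (fun ℓ hℓ => h0 ▸ hT1θ ℓ hℓ)
  refine ⟨hsq, hc.anticommute hq0.isUnit hquad hsq hcomm hrel,
    fun ℓ r h₀ h₁ => hcomm r ℓ h₀ h₁, fun ℓ => ?_, fun ℓ => ?_⟩
  · rw [hc ℓ]
    exact mul_innerAut_of_hecke (u ℓ) (hquad ℓ) _
  · rw [hc ℓ]
    exact (innerAut_mul_unit (u ℓ) _).symm

/-- in (any algebra with the relations of) the DG-enhanced affine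
`q`-Hecke algebra (`q ≠ 0, 1`), with `ξ₁ = θ` and `ξᵢ₊₁ = Tᵢ ξᵢ Tᵢ⁻¹` (the `Tᵢ`
are invertible since `(Tᵢ - q)(Tᵢ + 1) = 0` with `q ≠ 0`), one has `ξₗ² = 0`,
`ξᵣ ξₗ + ξₗ ξᵣ = 0`, and the commutation rules: `Tₗ ξᵣ = ξᵣ Tₗ` for
`r ≠ ℓ, ℓ+1`; `Tₗ ξₗ₊₁ = ξₗ Tₗ + (q-1)(ξₗ₊₁ - ξₗ)`; `Tₗ ξₗ = ξₗ₊₁ Tₗ`. -/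
theorem dg_q_Hecke_xi_relations {k : Type*} [Field k] {n : ℕ} (q : k) (hq0 : q ≠ 0) (hq1 : q ≠ 1)
    {A : Type*} [Ring A] [Algebra k A]
    (T : Fin n → A) (Xv Xinv : Fin (n + 1) → A) (θ : A)
    -- affine q-Hecke relations
    (hXinv : ∀ r : Fin (n + 1), Xv r * Xinv r = 1 ∧ Xinv r * Xv r = 1)
    (hXX : ∀ r s : Fin (n + 1), Xv r * Xv s = Xv s * Xv r)
    (hT2 : ∀ i : Fin n, (T i - q • 1) * (T i + 1) = 0)
    (hTTcomm : ∀ i j : Fin n, (i : ℕ) + 1 < (j : ℕ) → T i * T j = T j * T i)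
    (hbraid : ∀ i j : Fin n, (j : ℕ) = (i : ℕ) + 1 →
      T i * T j * T i = T j * T i * T j)
    (hTXT : ∀ i : Fin n, T i * Xv i.castSucc * T i = q • Xv i.succ)
    (hTXcomm : ∀ (i : Fin n) (r : Fin (n + 1)),
      r ≠ i.castSucc → r ≠ i.succ → T i * Xv r = Xv r * T i)
    -- relations involving the extra degree-1 generator θ
    (hθ2 : θ * θ = 0)
    (hXθ : ∀ r : Fin (n + 1), Xv r * θ = θ * Xv r)
    (hXinvθ : ∀ r : Fin (n + 1), Xinv r * θ = θ * Xinv r)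
    (hTθ : ∀ i : Fin n, (i : ℕ) ≠ 0 → T i * θ = θ * T i)
    (hT1θ : ∀ i : Fin n, (i : ℕ) = 0 →
      T i * θ * T i * θ + θ * T i * θ * T i = (q - 1) • (θ * T i * θ))
    (Tinv : Fin n → A)
    (hTinv : ∀ i : Fin n, T i * Tinv i = 1 ∧ Tinv i * T i = 1)
    (xi : Fin (n + 1) → A)
    (hxi0 : ∀ ℓ : Fin (n + 1), (ℓ : ℕ) = 0 → xi ℓ = θ)
    (hxiS : ∀ i : Fin n, xi i.succ = T i * xi i.castSucc * Tinv i) :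
    (∀ ℓ : Fin (n + 1), xi ℓ * xi ℓ = 0) ∧
    (∀ r ℓ : Fin (n + 1), xi r * xi ℓ + xi ℓ * xi r = 0) ∧
    (∀ (ℓ : Fin n) (r : Fin (n + 1)), r ≠ ℓ.castSucc → r ≠ ℓ.succ →
      T ℓ * xi r = xi r * T ℓ) ∧
    (∀ ℓ : Fin n, T ℓ * xi ℓ.succ
      = xi ℓ.castSucc * T ℓ + (q - 1) • (xi ℓ.succ - xi ℓ.castSucc)) ∧
    (∀ ℓ : Fin n, T ℓ * xi ℓ.castSucc = xi ℓ.succ * T ℓ) :=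
  dg_q_Hecke_xi_relations_general q hq0 T θ hT2 hTTcomm hbraid hθ2 hTθ hT1θ Tinv hTinv xi hxi0 hxiS
end

section
/- The extended Demazure operators ∂_i on P_d = k[X_1,...,X_d] ⊗ Λ(θ_1,...,θ_d), defined by ∂_i(f) = (f - s_i(f))/(X_i - X_{i+1}) using the S_d-action with s_i(θ_j) = θ_j + δ_{i,j}(X_i - X_{i+1})θ_{i+1}, satisfy ∂_i(θ_k) · g-relations: ∂_i commutes with left multiplication by θ_k for k ≠ i, and ∂_i commutes with left multiplication by θ_i - X_{i+1}θ_{i+1}. -/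
open MvPolynomial

/-- The ring `P_d = k[X₁,…,X_d] ⊗ Λ(θ₁,…,θ_d)` (with `d = n + 1`), realized as the
exterior algebra over the polynomial ring of the free module of rank `d`. -/
abbrev Pd (k : Type*) [Field k] (n : ℕ) : Type _ :=
  ExteriorAlgebra (MvPolynomial (Fin (n + 1)) k)
    (Fin (n + 1) → MvPolynomial (Fin (n + 1)) k)

/-- The exterior generator `θ_j` of `P_d`. -/
noncomputable def θv {k : Type*} [Field k] {n : ℕ} (j : Fin (n + 1)) : Pd k n :=
  ExteriorAlgebra.ι (MvPolynomial (Fin (n + 1)) k) (Pi.single j 1)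

/-!
If `c • ∂ f = f - σ f` for a ring endomorphism `σ` and a non-zero-divisor `c`, then `∂` is
linear over the `σ`-invariants: `c • ∂ (t f) = t f - t σ f = t (c • ∂ f)`, and `c` cancels.
Here `c = Xᵢ - Xᵢ₊₁` is a non-zero-divisor on `P_d` because the exterior algebra of a free
module is free, hence torsion-free over the domain `k[X]`. The elements `θⱼ`, `j ≠ i`, are
`sᵢ`-invariant by assumption, and so is `θᵢ - Xᵢ₊₁θᵢ₊₁`, since
`sᵢ(θᵢ - Xᵢ₊₁θᵢ₊₁) = θᵢ + (Xᵢ - Xᵢ₊₁)θᵢ₊₁ - Xᵢθᵢ₊₁`.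
-/

instance ExteriorAlgebra.instModuleFree {R M : Type*} [CommRing R] [AddCommGroup M] [Module R M]
    [Module.Free R M] : Module.Free R (ExteriorAlgebra R M) := by
  classical
  let : LinearOrder (Module.Free.ChooseBasisIndex R M) := linearOrderOfSTO WellOrderingRel
  exact .of_basis (Module.Free.chooseBasis R M).ExteriorAlgebra

theorem apply_mul_eq_mul_apply_of_map_eq_self {R A : Type*} [CommSemiring R] [Ring A] [Algebra R A]
    {c : R} (hc : IsSMulRegular A c) (σ : A →+* A) (D : A → A)
    (hD : ∀ f, algebraMap R A c * D f = f - σ f) {t : A} (ht : σ t = t) (f : A) :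
    D (t * f) = t * D f := by
  apply hc
  simp only [Algebra.smul_def]
  rw [hD, map_mul, ht, ← mul_sub, ← hD, Algebra.left_comm]

/-- the extended Demazure operators `∂ᵢ` on
`P_d = k[X₁,…,X_d] ⊗ Λ(θ₁,…,θ_d)`, characterized by
`(Xᵢ - Xᵢ₊₁)·∂ᵢ f = f - sᵢ f` for the `S_d`-action with
`sᵢ(θⱼ) = θⱼ + δ_{i,j}(Xᵢ - Xᵢ₊₁)θᵢ₊₁`, commute with left multiplication by
`θ_k` for `k ≠ i`, and with left multiplication by `θᵢ - Xᵢ₊₁θᵢ₊₁`. -/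
theorem demazure_Pd_theta_commutation {k : Type*} [Field k] {n : ℕ}
    (s : Fin n → (Pd k n →+* Pd k n))
    (hsX : ∀ (i : Fin n) (r : MvPolynomial (Fin (n + 1)) k),
      s i (algebraMap (MvPolynomial (Fin (n + 1)) k) (Pd k n) r)
        = algebraMap (MvPolynomial (Fin (n + 1)) k) (Pd k n) (rename (Equiv.swap i.castSucc i.succ) r))
    (hsθ : ∀ i : Fin n, s i (θv i.castSucc)
        = θv i.castSucc
          + algebraMap (MvPolynomial (Fin (n + 1)) k) (Pd k n) (X i.castSucc - X i.succ) * θv i.succ)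
    (hsθ' : ∀ (i : Fin n) (j : Fin (n + 1)), j ≠ i.castSucc → s i (θv j) = θv j)
    (Dem : Fin n → Pd k n → Pd k n)
    (hDem : ∀ (i : Fin n) (f : Pd k n),
      algebraMap (MvPolynomial (Fin (n + 1)) k) (Pd k n) (X i.castSucc - X i.succ) * Dem i f = f - s i f)
    (i : Fin n) (f : Pd k n) :
    (∀ j : Fin (n + 1), j ≠ i.castSucc → Dem i (θv j * f) = θv j * Dem i f) ∧
    Dem i ((θv i.castSucc - algebraMap (MvPolynomial (Fin (n + 1)) k) (Pd k n) (X i.succ) * θv i.succ) * f)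
      = (θv i.castSucc - algebraMap (MvPolynomial (Fin (n + 1)) k) (Pd k n) (X i.succ) * θv i.succ)
        * Dem i f := by
  have hreg : IsSMulRegular (Pd k n) (X i.castSucc - X i.succ : MvPolynomial (Fin (n + 1)) k) :=
    .of_ne_zero (sub_ne_zero.2 fun h => Fin.castSucc_lt_succ.ne (X_injective h))
  have hfix : s i (θv i.castSucc
      - algebraMap (MvPolynomial (Fin (n + 1)) k) (Pd k n) (X i.succ) * θv i.succ)
      = θv i.castSucc
        - algebraMap (MvPolynomial (Fin (n + 1)) k) (Pd k n) (X i.succ) * θv i.succ := by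
    rw [map_sub, map_mul, hsθ, hsθ' i i.succ Fin.castSucc_lt_succ.ne', hsX, rename_X,
      Equiv.swap_apply_right, map_sub]
    noncomm_ring
  exact ⟨fun j hj => apply_mul_eq_mul_apply_of_map_eq_self hreg (s i) (Dem i) (hDem i)
    (hsθ' i j hj) f, apply_mul_eq_mul_apply_of_map_eq_self hreg (s i) (Dem i) (hDem i) hfix f⟩
end
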